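/- Let σ, ν, μ be Minkowski velocities with ⟨μ,ν⟩ > 0 and ⟨σ,ν+σ⟩ ≠ 0, and define the Einstein–Oziewicz relative velocity ε := (c²/⟨μ,ν⟩)·[μ − (⟨μ,ν+σ⟩/⟨σ,ν+σ⟩)·(ν + σ)] + σ. Then the passive covariant Lorentz boost of μ equals the Einstein–Minkowski relative velocity built from ε: Lp(σ,ν)μ = (ε + σ)/√(1 + ⟨ε,ε⟩/c²). -/

import Mathlib

noncomputable section

/-- Minkowski bilinear form on ℝ⁴ with signature +−−−. -/
def mink (u v : Fin 4 → ℝ) : ℝ := u 0 * v 0 - u 1 * v 1 - u 2 * v 2 - u 3 * v 3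

/-- Passive covariant Lorentz boost determined by Minkowski velocities σ, ν. -/
def Lp (c : ℝ) (σ ν μ : Fin 4 → ℝ) : Fin 4 → ℝ :=
  μ - (mink μ (ν + σ) / mink σ (ν + σ)) • (ν + σ) + (2 * mink μ ν / c ^ 2) • σ

/-!
Put `n := ν + σ`. Since `⟨σ,σ⟩ = ⟨ν,ν⟩`, we have `⟨n,n⟩ = 2⟨σ,n⟩`, so
`R := μ - (⟨μ,n⟩/⟨σ,n⟩) n` is the reflection of `μ` in the hyperplane orthogonal to `n`.
This reflection is an isometry exchanging `σ` and `-ν`, hence `⟨R,R⟩ = c²` and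
`⟨R,σ⟩ = -⟨μ,ν⟩`. Then `ε = (c²/⟨μ,ν⟩) R + σ` has `1 + ⟨ε,ε⟩/c² = (c²/⟨μ,ν⟩)²`, and both sides
of the identity equal `R + (2⟨μ,ν⟩/c²) σ`.
-/

namespace LinearMap.BilinForm

variable {V : Type*} [AddCommGroup V] [Module ℝ V] (B : LinearMap.BilinForm ℝ V)

def reflect (n x : V) : V := x - (2 * B x n / B n n) • n

variable {B}

namespace IsSymm

variable (hB : B.IsSymm)
include hB

theorem apply_reflect_left (n x y : V) : B (B.reflect n x) y = B x (B.reflect n y) := by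
  simp only [reflect, map_sub, map_smul, LinearMap.sub_apply, LinearMap.smul_apply, smul_eq_mul,
    hB.eq n y]
  ring

theorem apply_reflect_reflect {n : V} (hn : B n n ≠ 0) (x y : V) :
    B (B.reflect n x) (B.reflect n y) = B x y := by
  simp only [reflect, map_sub, map_smul, LinearMap.sub_apply, LinearMap.smul_apply, smul_eq_mul,
    hB.eq n y]
  field_simp
  ring

theorem apply_add_add_of_apply_self_eq {u v : V} (h : B u u = B v v) :
    B (u + v) (u + v) = 2 * B v (u + v) := by
  simp only [map_add, LinearMap.add_apply, h, hB.eq u v]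
  ring

theorem reflect_add_of_apply_self_eq {u v : V} (h : B u u = B v v) (x : V) :
    B.reflect (u + v) x = x - (B x (u + v) / B v (u + v)) • (u + v) := by
  rw [reflect, hB.apply_add_add_of_apply_self_eq h, mul_div_mul_left _ _ two_ne_zero]

theorem reflect_add_right_of_apply_self_eq {u v : V} (h : B u u = B v v)
    (huv : B v (u + v) ≠ 0) : B.reflect (u + v) v = -u := by
  rw [hB.reflect_add_of_apply_self_eq h, div_self huv, one_smul]
  abel

theorem apply_reflect_add_right_of_apply_self_eq {u v : V} (h : B u u = B v v)
    (huv : B v (u + v) ≠ 0) (x : V) : B (B.reflect (u + v) x) v = -B x u := by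
  rw [hB.apply_reflect_left, hB.reflect_add_right_of_apply_self_eq h huv, map_neg]

theorem inv_sqrt_smul_add_eq {c m : ℝ} (hc : c ≠ 0) (hm : 0 < m) {r s ε : V}
    (hr : B r r = c ^ 2) (hs : B s s = c ^ 2) (hrs : B r s = -m)
    (hε : ε = (c ^ 2 / m) • r + s) :
    (√(1 + B ε ε / c ^ 2))⁻¹ • (ε + s) = r + (2 * m / c ^ 2) • s := by
  have hεε : 1 + B ε ε / c ^ 2 = (c ^ 2 / m) ^ 2 := by
    simp only [hε, map_add, map_smul, LinearMap.add_apply, LinearMap.smul_apply, smul_eq_mul,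
      hr, hs, hrs, hB.eq s r]
    field_simp
    ring
  rw [hεε, Real.sqrt_sq (by positivity), hε]
  match_scalars <;> field_simp
  ring

end IsSymm

end LinearMap.BilinForm

def minkForm : LinearMap.BilinForm ℝ (Fin 4 → ℝ) :=
  LinearMap.mk₂ ℝ mink (fun _ _ _ ↦ by simp only [mink, Pi.add_apply]; ring)
    (fun _ _ _ ↦ by simp only [mink, Pi.smul_apply, smul_eq_mul]; ring)
    (fun _ _ _ ↦ by simp only [mink, Pi.add_apply]; ring)
    (fun _ _ _ ↦ by simp only [mink, Pi.smul_apply, smul_eq_mul]; ring)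

theorem minkForm_isSymm : LinearMap.BilinForm.IsSymm minkForm :=
  ⟨fun _ _ ↦ by simp only [minkForm, LinearMap.mk₂_apply, mink]; ring⟩

theorem passive_boost_eq_einstein_minkowski (c : ℝ) (hc : 0 < c) (σ ν μ : Fin 4 → ℝ)
    (hσ : mink σ σ = c ^ 2) (hν : mink ν ν = c ^ 2) (hμ : mink μ μ = c ^ 2)
    (hμν : 0 < mink μ ν) (hσνσ : mink σ (ν + σ) ≠ 0)
    (ε : Fin 4 → ℝ)
    (hε : ε = (c ^ 2 / mink μ ν) •
        (μ - (mink μ (ν + σ) / mink σ (ν + σ)) • (ν + σ)) + σ) :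
    Lp c σ ν μ = (Real.sqrt (1 + mink ε ε / c ^ 2))⁻¹ • (ε + σ) := by
  have hsymm := minkForm_isSymm
  have hνσ : minkForm ν ν = minkForm σ σ := hν.trans hσ.symm
  have hrefl : LinearMap.BilinForm.reflect minkForm (ν + σ) μ =
      μ - (mink μ (ν + σ) / mink σ (ν + σ)) • (ν + σ) :=
    hsymm.reflect_add_of_apply_self_eq hνσ μ
  have hn : minkForm (ν + σ) (ν + σ) ≠ 0 := by
    rw [hsymm.apply_add_add_of_apply_self_eq hνσ]
    exact mul_ne_zero two_ne_zero hσνσ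
  rw [Lp, ← hrefl]
  rw [← hrefl] at hε
  refine (hsymm.inv_sqrt_smul_add_eq hc.ne' hμν ?_ hσ ?_ hε).symm
  · rw [hsymm.apply_reflect_reflect hn]
    exact hμ
  · exact hsymm.apply_reflect_add_right_of_apply_self_eq hνσ hσνσ μ
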